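/- Let G be a bipartite graph and let H be a star forest of G with a II-coloring (A_2, B_2). Then the schedule that runs 3 consecutive A-patterns (time 9) on the machines of A_2 and simultaneously 2 consecutive B-patterns (time 8 ≤ 9) on the machines of B_2 is feasible with respect to G: no two blocking units of jobs on G-adjacent machines overlap. -/

import Mathlib

/-- The graph determined by a "center" assignment: each non-fixed vertex `v` is joined
exactly to its center `c v`. -/
def forestGraph {V : Type*} (c : V → V) : SimpleGraph V where
  Adj v w := v ≠ w ∧ (c v = w ∨ c w = v)
  symm := ⟨by intro v w h; exact ⟨Ne.symm h.1, h.2.symm⟩⟩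
  loopless := ⟨by intro v h; exact h.1 rfl⟩

/-- A star forest of `G`: a spanning subgraph of `G` each of whose components is a star
`K_{1,ℓ}` with `ℓ ≥ 1`, encoded by assigning to every vertex the center of its star
(centers are fixed points; every star has at least one leaf). -/
structure StarForest {V : Type*} (G : SimpleGraph V) where
  center : V → V
  idem : ∀ v, center (center v) = center v
  sub : forestGraph center ≤ G
  spanning : ∀ v, center v = v → ∃ w, center w = v ∧ w ≠ v

/-- The leaves of a star forest. -/
def StarForest.leaves {V : Type*} {G : SimpleGraph V} (F : StarForest G) : Set V :=
  {v | F.center v ≠ v}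

/-- The number of vertices of the star with center `c` (so a star `S_ℓ` has size `ℓ+1`). -/
noncomputable def StarForest.size {V : Type*} {G : SimpleGraph V} (F : StarForest G)
    (c : V) : ℕ :=
  Set.ncard {v | F.center v = c}

/-- An alternating path visiting the distinct stars `C_1, …, C_k` of the star forest `F`:
`c i` is the center of `C_i` and, for `2 ≤ i ≤ k`, `lf i` is a leaf of `C_i`; consecutive
stars are joined by a `G`-edge from the center of `C_i` to the leaf `lf (i+1)` of
`C_{i+1}` that is not a forest edge, while the edges from each `lf i` to its center `c i`
are forest edges. -/
structure AltPath {V : Type*} {G : SimpleGraph V} (F : StarForest G) (k : ℕ) where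
  c : ℕ → V
  lf : ℕ → V
  hk : 2 ≤ k
  hc : ∀ i, 1 ≤ i → i ≤ k → F.center (c i) = c i
  hinj : ∀ i j, 1 ≤ i → i ≤ k → 1 ≤ j → j ≤ k → c i = c j → i = j
  hlf : ∀ i, 2 ≤ i → i ≤ k → F.center (lf i) = c i ∧ lf i ≠ c i
  hG : ∀ i, 1 ≤ i → i < k → G.Adj (c i) (lf (i + 1))
  hnotF : ∀ i, 1 ≤ i → i < k → ¬ (forestGraph F.center).Adj (c i) (lf (i + 1))

/-- The edge set of an alternating path: the forest edges `{lf i, c i}` (`2 ≤ i ≤ k`)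
and the non-forest edges `{c i, lf (i+1)}` (`1 ≤ i ≤ k−1`). -/
def AltPath.edges {V : Type*} {G : SimpleGraph V} {F : StarForest G} {k : ℕ}
    (P : AltPath F k) : Set (Sym2 V) :=
  {e | ∃ i, 2 ≤ i ∧ i ≤ k ∧ e = s(P.lf i, P.c i)} ∪
  {e | ∃ i, 1 ≤ i ∧ i < k ∧ e = s(P.c i, P.lf (i + 1))}

/-- Alternating path of type II: `C_1 ≅ S_1`, intermediate stars `≅ S_2`, and
`C_k ≅ S_ℓ` with `ℓ ≥ 3`. -/
def AltPath.IsTypeII {V : Type*} {G : SimpleGraph V} {F : StarForest G} {k : ℕ}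
    (P : AltPath F k) : Prop :=
  F.size (P.c 1) = 2 ∧ (∀ i, 2 ≤ i → i < k → F.size (P.c i) = 3) ∧ 4 ≤ F.size (P.c k)

/-- Alternating path of type III: `C_1 ≅ S_2`, intermediate stars `≅ S_3`, and
`C_k ≅ S_ℓ` with `ℓ ≥ 4`. -/
def AltPath.IsTypeIII {V : Type*} {G : SimpleGraph V} {F : StarForest G} {k : ℕ}
    (P : AltPath F k) : Prop :=
  F.size (P.c 1) = 3 ∧ (∀ i, 2 ≤ i → i < k → F.size (P.c i) = 4) ∧ 5 ≤ F.size (P.c k)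

/-!
Machines of `A₂` have no `G`-neighbour in `A₂ ∪ B₂`, so every neighbour of an `A₂`-machine
is idle. A job of a `B₂`-machine `m` starting at `s` blocks the units `s` and `s + 2`, and
`s ≡ col m (mod 2)`; hence two adjacent `B₂`-machines, lying in different colour classes,
block at times of different parity.
-/

def blockingUnits (S : Set ℕ) : Set ℕ := ⋃ s ∈ S, {s, s + 2}

@[simp]
theorem blockingUnits_empty : blockingUnits ∅ = ∅ := by
  simp [blockingUnits]

theorem mod_two_of_mem_blockingUnits {S : Set ℕ} {r x : ℕ} (hS : ∀ s ∈ S, s % 2 = r)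
    (hx : x ∈ blockingUnits S) : x % 2 = r := by
  simp only [blockingUnits, Set.mem_iUnion, Set.mem_insert_iff, Set.mem_singleton_iff] at hx
  obtain ⟨s, hs, hxs⟩ := hx
  have := hS s hs
  omega

theorem disjoint_blockingUnits_of_mod_two_ne {S T : Set ℕ} {r r' : ℕ}
    (hS : ∀ s ∈ S, s % 2 = r) (hT : ∀ t ∈ T, t % 2 = r') (hne : r ≠ r') :
    Disjoint (blockingUnits S) (blockingUnits T) :=
  Set.disjoint_left.2 fun _ hx hx' =>
    hne <| (mod_two_of_mem_blockingUnits hS hx).symm.trans (mod_two_of_mem_blockingUnits hT hx')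

def bPatternStarts (b : Bool) : Set ℕ := {(if b then 1 else 0), (if b then 1 else 0) + 4}

theorem mod_two_of_mem_bPatternStarts {b : Bool} {s : ℕ} (hs : s ∈ bPatternStarts b) :
    s % 2 = if b then 1 else 0 := by
  simp only [bPatternStarts, Set.mem_insert_iff, Set.mem_singleton_iff] at hs
  rcases hs with rfl | rfl <;> cases b <;> rfl

theorem disjoint_blockingUnits_bPatternStarts {b b' : Bool} (h : b ≠ b') :
    Disjoint (blockingUnits (bPatternStarts b)) (blockingUnits (bPatternStarts b')) :=
  disjoint_blockingUnits_of_mod_two_ne (fun _ => mod_two_of_mem_bPatternStarts)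
    (fun _ => mod_two_of_mem_bPatternStarts) (by cases b <;> cases b' <;> simp_all)

theorem pairwise_bPatternStarts (b : Bool) :
    (bPatternStarts b).Pairwise fun s s' => s + 3 ≤ s' ∨ s' + 3 ≤ s := by
  cases b <;> simp [bPatternStarts, Set.pairwise_insert]

theorem pairwise_aPatternStarts :
    ({0, 3, 6} : Set ℕ).Pairwise fun s s' => s + 3 ≤ s' ∨ s' + 3 ≤ s := by
  simp [Set.pairwise_insert]

section PatternSchedule

variable {V : Type*} (A B : Set V) (col : V → Bool)

open Classical in
noncomputable def patternStarts (m : V) : Set ℕ :=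
  if m ∈ A then {0, 3, 6} else if m ∈ B then bPatternStarts (col m) else ∅

variable {A B}

theorem patternStarts_of_mem_left {m : V} (h : m ∈ A) :
    patternStarts A B col m = {0, 3, 6} :=
  if_pos h

theorem patternStarts_of_mem_right {m : V} (hA : m ∉ A) (hB : m ∈ B) :
    patternStarts A B col m = bPatternStarts (col m) := by
  rw [patternStarts, if_neg hA, if_pos hB]

theorem patternStarts_of_not_mem {m : V} (h : m ∉ A ∪ B) : patternStarts A B col m = ∅ := by
  rw [Set.mem_union, not_or] at h
  rw [patternStarts, if_neg h.1, if_neg h.2]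

theorem pairwise_patternStarts (m : V) :
    (patternStarts A B col m).Pairwise fun s s' => s + 3 ≤ s' ∨ s' + 3 ≤ s := by
  by_cases hA : m ∈ A
  · rw [patternStarts_of_mem_left col hA]; exact pairwise_aPatternStarts
  by_cases hB : m ∈ B
  · rw [patternStarts_of_mem_right col hA hB]; exact pairwise_bPatternStarts _
  · rw [patternStarts_of_not_mem col (by simp [hA, hB])]; exact Set.pairwise_empty _

theorem disjoint_blockingUnits_patternStarts {G : SimpleGraph V}
    (hcol : ∀ v w, G.Adj v w → col v ≠ col w)
    (hA : ∀ a ∈ A, ∀ v ∈ A ∪ B, v ≠ a → ¬ G.Adj a v) {m m' : V} (hadj : G.Adj m m') :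
    Disjoint (blockingUnits (patternStarts A B col m))
      (blockingUnits (patternStarts A B col m')) := by
  by_cases hmA : m ∈ A
  · rw [patternStarts_of_not_mem col fun h => hA m hmA m' h hadj.ne.symm hadj]
    simp
  by_cases hm'A : m' ∈ A
  · rw [patternStarts_of_not_mem col fun h => hA m' hm'A m h hadj.ne hadj.symm]
    simp
  by_cases hmB : m ∈ B
  swap
  · rw [patternStarts_of_not_mem col (show m ∉ A ∪ B by simp [hmA, hmB])]; simp
  by_cases hm'B : m' ∈ B
  swap
  · rw [patternStarts_of_not_mem col (show m' ∉ A ∪ B by simp [hm'A, hm'B])]; simp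
  rw [patternStarts_of_mem_right col hmA hmB, patternStarts_of_mem_right col hm'A hm'B]
  exact disjoint_blockingUnits_bPatternStarts (hcol m m' hadj)

end PatternSchedule

open Classical in
theorem II_coloring_schedule_feasible_general {V : Type*} (G : SimpleGraph V)
    (col : V → Bool) (hcol : ∀ v w, G.Adj v w → col v ≠ col w)
    (A2 B2 : Set V)
    (hA2 : ∀ a ∈ A2, ∀ v ∈ A2 ∪ B2, v ≠ a → ¬ G.Adj a v) :
    let starts : V → Set ℕ := fun m =>
      if m ∈ A2 then {0, 3, 6}
      else if m ∈ B2 then {(if col m then 1 else 0), (if col m then 1 else 0) + 4}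
      else ∅
    let blk : V → Set ℕ := fun m => ⋃ s ∈ starts m, {s, s + 2}
    (∀ m m', G.Adj m m' → Disjoint (blk m) (blk m')) ∧
    (∀ m, ∀ s ∈ starts m, ∀ s' ∈ starts m, s ≠ s' → s + 3 ≤ s' ∨ s' + 3 ≤ s) := by
  intro starts blk
  exact ⟨fun _ _ hadj => disjoint_blockingUnits_patternStarts col hcol hA2 hadj,
    pairwise_patternStarts col⟩

open Classical in
/-- Let `G` be bipartite (with proper 2-colouring `col`), `F` a star forest of `G`, and
`(A₂, B₂)` a II-colouring: `A₂` and `B₂` are disjoint, no vertex of `A₂` is `G`-adjacent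
to another vertex of `A₂ ∪ B₂`, (i) for every star `S_ℓ` with `ℓ ≥ 3` the set `A₂` meets
it exactly in its leaves (a maximum independent set), (ii) `B₂` contains every `S_1`,
(iii) every `S_2` either meets `A₂` exactly in its leaves or lies in `B₂`.  Then the
schedule running 3 consecutive A-patterns (unit jobs starting at times 0, 3, 6, ending at
time 9) on the machines of `A₂` and simultaneously 2 consecutive B-patterns (jobs
starting at times 0,4 or 1,5 according to the bipartition class, ending by time 8 ≤ 9) on
the machines of `B₂` is feasible with respect to `G`: no two blocking units of jobs on
`G`-adjacent machines overlap, and jobs on the same machine do not overlap. -/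
theorem II_coloring_schedule_feasible {V : Type*} (G : SimpleGraph V)
    (col : V → Bool) (hcol : ∀ v w, G.Adj v w → col v ≠ col w)
    (F : StarForest G) (A2 B2 : Set V)
    (hdisj : Disjoint A2 B2)
    (hA2 : ∀ a ∈ A2, ∀ v ∈ A2 ∪ B2, v ≠ a → ¬ G.Adj a v)
    (hi : ∀ c, F.center c = c → 4 ≤ F.size c →
      ∀ v, F.center v = c → (v ∈ A2 ↔ v ≠ c))
    (hii : ∀ c, F.center c = c → F.size c = 2 → ∀ v, F.center v = c → v ∈ B2)
    (hiii : ∀ c, F.center c = c → F.size c = 3 →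
      (∀ v, F.center v = c → (v ∈ A2 ↔ v ≠ c)) ∨ (∀ v, F.center v = c → v ∈ B2)) :
    let starts : V → Set ℕ := fun m =>
      if m ∈ A2 then {0, 3, 6}
      else if m ∈ B2 then {(if col m then 1 else 0), (if col m then 1 else 0) + 4}
      else ∅
    let blk : V → Set ℕ := fun m => ⋃ s ∈ starts m, {s, s + 2}
    (∀ m m', G.Adj m m' → Disjoint (blk m) (blk m')) ∧
    (∀ m, ∀ s ∈ starts m, ∀ s' ∈ starts m, s ≠ s' → s + 3 ≤ s' ∨ s' + 3 ≤ s) :=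
  II_coloring_schedule_feasible_general G col hcol A2 B2 hA2
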